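/- Define the 10×10 matrix u over T = k[x,y,z] with rows (x, 0, 0, y², yz², z⁴, 0, 0, 0, −z³), (0, x, 0, −z³, y², yz², 0, 0, 0, −yz), (0, 0, x, −yz, −z³, y², 0, 0, z², 0), (y, −z², 0, −x, 0, 0, 0, 0, 0, 0), (0, y, −z², 0, −x, 0, z, 0, 0, 0), (z, 0, y, 0, 0, −x, 0, z², 0, 0), (0, 0, 0, 0, 0, 0, x, 0, z³, y²), (0, 0, 0, 0, 0, 0, 0, x, −y, z²), (0, 0, 0, 0, 0, 0, z², −y², −x, 0), (0, 0, 0, 0, 0, 0, y, z³, 0, −x). Then u·u = (x² + y³ + z⁵)·I₁₀, i.e., (u,u) is a symmetric matrix factorization of x² + y³ + z⁵. -/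
import Mathlib


open MvPolynomial

/-- Symmetric matrix factorization of x^2+y^3+z^5 representing the rank-five bundle E_5 of weight type (2,3,5). -/
noncomputable def uE5_235 (k : Type*) [Field k] :
    Matrix (Fin 10) (Fin 10) (MvPolynomial (Fin 3) k) :=
  let x : MvPolynomial (Fin 3) k := X 0
  let y : MvPolynomial (Fin 3) k := X 1
  let z : MvPolynomial (Fin 3) k := X 2
  !![x, 0, 0, y ^ 2, y * z ^ 2, z ^ 4, 0, 0, 0, -z ^ 3;
     0, x, 0, -z ^ 3, y ^ 2, y * z ^ 2, 0, 0, 0, -(y * z);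
     0, 0, x, -(y * z), -z ^ 3, y ^ 2, 0, 0, z ^ 2, 0;
     y, -z ^ 2, 0, -x, 0, 0, 0, 0, 0, 0;
     0, y, -z ^ 2, 0, -x, 0, z, 0, 0, 0;
     z, 0, y, 0, 0, -x, 0, z ^ 2, 0, 0;
     0, 0, 0, 0, 0, 0, x, 0, z ^ 3, y ^ 2;
     0, 0, 0, 0, 0, 0, 0, x, -y, z ^ 2;
     0, 0, 0, 0, 0, 0, z ^ 2, -y ^ 2, -x, 0;
     0, 0, 0, 0, 0, 0, y, z ^ 3, 0, -x]

section aux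
variable {α : Type*} (a₀ a₁ a₂ a₃ a₄ a₅ a₆ a₇ a₈ a₉ : α)
lemma vec10_0 : ![a₀,a₁,a₂,a₃,a₄,a₅,a₆,a₇,a₈,a₉] (0 : Fin 10) = a₀ := rfl
lemma vec10_1 : ![a₀,a₁,a₂,a₃,a₄,a₅,a₆,a₇,a₈,a₉] (1 : Fin 10) = a₁ := rfl
lemma vec10_2 : ![a₀,a₁,a₂,a₃,a₄,a₅,a₆,a₇,a₈,a₉] (2 : Fin 10) = a₂ := rfl
lemma vec10_3 : ![a₀,a₁,a₂,a₃,a₄,a₅,a₆,a₇,a₈,a₉] (3 : Fin 10) = a₃ := rfl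
lemma vec10_4 : ![a₀,a₁,a₂,a₃,a₄,a₅,a₆,a₇,a₈,a₉] (4 : Fin 10) = a₄ := rfl
lemma vec10_5 : ![a₀,a₁,a₂,a₃,a₄,a₅,a₆,a₇,a₈,a₉] (5 : Fin 10) = a₅ := rfl
lemma vec10_6 : ![a₀,a₁,a₂,a₃,a₄,a₅,a₆,a₇,a₈,a₉] (6 : Fin 10) = a₆ := rfl
lemma vec10_7 : ![a₀,a₁,a₂,a₃,a₄,a₅,a₆,a₇,a₈,a₉] (7 : Fin 10) = a₇ := rfl
lemma vec10_8 : ![a₀,a₁,a₂,a₃,a₄,a₅,a₆,a₇,a₈,a₉] (8 : Fin 10) = a₈ := rfl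
lemma vec10_9 : ![a₀,a₁,a₂,a₃,a₄,a₅,a₆,a₇,a₈,a₉] (9 : Fin 10) = a₉ := rfl
lemma vec10m_0 (h : (0:ℕ) < 10) : ![a₀,a₁,a₂,a₃,a₄,a₅,a₆,a₇,a₈,a₉] (⟨0, h⟩ : Fin 10) = a₀ := rfl
lemma vec10m_1 (h : (1:ℕ) < 10) : ![a₀,a₁,a₂,a₃,a₄,a₅,a₆,a₇,a₈,a₉] (⟨1, h⟩ : Fin 10) = a₁ := rfl
lemma vec10m_2 (h : (2:ℕ) < 10) : ![a₀,a₁,a₂,a₃,a₄,a₅,a₆,a₇,a₈,a₉] (⟨2, h⟩ : Fin 10) = a₂ := rfl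
lemma vec10m_3 (h : (3:ℕ) < 10) : ![a₀,a₁,a₂,a₃,a₄,a₅,a₆,a₇,a₈,a₉] (⟨3, h⟩ : Fin 10) = a₃ := rfl
lemma vec10m_4 (h : (4:ℕ) < 10) : ![a₀,a₁,a₂,a₃,a₄,a₅,a₆,a₇,a₈,a₉] (⟨4, h⟩ : Fin 10) = a₄ := rfl
lemma vec10m_5 (h : (5:ℕ) < 10) : ![a₀,a₁,a₂,a₃,a₄,a₅,a₆,a₇,a₈,a₉] (⟨5, h⟩ : Fin 10) = a₅ := rfl
lemma vec10m_6 (h : (6:ℕ) < 10) : ![a₀,a₁,a₂,a₃,a₄,a₅,a₆,a₇,a₈,a₉] (⟨6, h⟩ : Fin 10) = a₆ := rfl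
lemma vec10m_7 (h : (7:ℕ) < 10) : ![a₀,a₁,a₂,a₃,a₄,a₅,a₆,a₇,a₈,a₉] (⟨7, h⟩ : Fin 10) = a₇ := rfl
lemma vec10m_8 (h : (8:ℕ) < 10) : ![a₀,a₁,a₂,a₃,a₄,a₅,a₆,a₇,a₈,a₉] (⟨8, h⟩ : Fin 10) = a₈ := rfl
lemma vec10m_9 (h : (9:ℕ) < 10) : ![a₀,a₁,a₂,a₃,a₄,a₅,a₆,a₇,a₈,a₉] (⟨9, h⟩ : Fin 10) = a₉ := rfl
end aux

set_option maxHeartbeats 4000000 in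
theorem stmt_10 (k : Type*) [Field k] :
    uE5_235 k * uE5_235 k =
      ((X 0 ^ 2 + X 1 ^ 3 + X 2 ^ 5 : MvPolynomial (Fin 3) k)) •
        (1 : Matrix (Fin 10) (Fin 10) (MvPolynomial (Fin 3) k)) := by
  refine Matrix.ext fun i j => ?_
  fin_cases i <;> fin_cases j <;>
    · simp only [uE5_235, Matrix.mul_apply, Fin.sum_univ_succ, Fin.sum_univ_zero,
        Matrix.smul_apply, Matrix.one_apply, smul_eq_mul, Matrix.of_apply,
        Matrix.cons_val_zero, Matrix.cons_val_succ,
        vec10_0, vec10_1, vec10_2, vec10_3, vec10_4, vec10_5, vec10_6, vec10_7, vec10_8, vec10_9,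
        vec10m_0, vec10m_1, vec10m_2, vec10m_3, vec10m_4, vec10m_5, vec10m_6, vec10m_7, vec10m_8, vec10m_9,
        Fin.isValue, ne_eq, reduceIte, Fin.reduceEq, Fin.mk.injEq, if_true, if_false]
      try norm_num
      try ring
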